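/- arXiv:1805.10369 — 6 statements merged into one kernel-verified Lean document; each statement's English description precedes it below -/
import Mathlib

section
/- Consider the tanh-RNN φ_{W,U}(h, x) = tanh(W h + U x) with ‖W‖ ≤ λ. For h ∈ ℝ^n and fixed x ∈ ℝ^d, the derivative of φ with respect to the state is the matrix D(h) = diag(tanh'(W h + U x)) W, where tanh'(z) = 1 − tanh(z)^2 is applied coordinatewise. Then for all h, h' ∈ ℝ^n and all x, ‖D(h) − D(h')‖ ≤ 2λ^2 ‖h − h'‖; that is, the state-Jacobian of the tanh-RNN is 2λ^2-Lipschitz in the state. -/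
/-- The derivative of `tanh`, `tanh'(z) = 1 − tanh(z)²`. -/
noncomputable def tanhDeriv (z : ℝ) : ℝ := 1 - Real.tanh z ^ 2

/-- The state-Jacobian of the tanh-RNN `φ(h,x) = tanh(W h + U x)`:
`D(h) = diag(tanh'(W h + U x)) W`. -/
noncomputable def rnnJacobian {n d : ℕ}
    (W : EuclideanSpace ℝ (Fin n) →L[ℝ] EuclideanSpace ℝ (Fin n))
    (U : EuclideanSpace ℝ (Fin d) →L[ℝ] EuclideanSpace ℝ (Fin n))
    (h : EuclideanSpace ℝ (Fin n)) (x : EuclideanSpace ℝ (Fin d)) :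
    EuclideanSpace ℝ (Fin n) →L[ℝ] EuclideanSpace ℝ (Fin n) :=
  (Matrix.toEuclideanCLM (𝕜 := ℝ)
    (Matrix.diagonal (fun i => tanhDeriv ((W h + U x) i)))).comp W

lemma tanh_hasDerivAt (x : ℝ) : HasDerivAt Real.tanh (tanhDeriv x) x := by
  have hc : Real.cosh x ≠ 0 := (Real.cosh_pos x).ne'
  have h := (Real.hasDerivAt_sinh x).div (Real.hasDerivAt_cosh x) hc
  have heq : (Real.cosh x * Real.cosh x - Real.sinh x * Real.sinh x) / Real.cosh x ^ 2
      = tanhDeriv x := by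
    rw [tanhDeriv, Real.tanh_eq_sinh_div_cosh]
    field_simp
  rw [← heq]
  exact h.congr_of_eventuallyEq (Filter.Eventually.of_forall fun y =>
    (Real.tanh_eq_sinh_div_cosh y))

lemma abs_tanh_le (x : ℝ) : |Real.tanh x| ≤ 1 := by
  have hc := Real.cosh_pos x
  rw [Real.tanh_eq_sinh_div_cosh, abs_div, abs_of_pos hc, div_le_one hc]
  nlinarith [Real.cosh_sq_sub_sinh_sq x, abs_nonneg (Real.sinh x),
    sq_abs (Real.sinh x), Real.one_le_cosh x]

lemma tanh_lipschitz (a b : ℝ) : |Real.tanh a - Real.tanh b| ≤ |a - b| := by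
  have hd : ∀ x : ℝ, ‖deriv Real.tanh x‖₊ ≤ 1 := by
    intro x
    rw [(tanh_hasDerivAt x).deriv]
    have h1 := abs_tanh_le x
    rw [← NNReal.coe_le_coe]
    simp only [coe_nnnorm, NNReal.coe_one, Real.norm_eq_abs, tanhDeriv]
    have h2 : Real.tanh x ^ 2 ≤ 1 := (sq_le_one_iff_abs_le_one _).mpr h1
    rw [abs_le]
    constructor <;> nlinarith [sq_nonneg (Real.tanh x)]
  have := lipschitzWith_of_nnnorm_deriv_le
    (fun x => (tanh_hasDerivAt x).differentiableAt) hd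
  have h := this.dist_le_mul a b
  simpa [Real.dist_eq] using h

lemma tanhDeriv_lipschitz (a b : ℝ) : |tanhDeriv a - tanhDeriv b| ≤ 2 * |a - b| := by
  have h1 : tanhDeriv a - tanhDeriv b
      = (Real.tanh b - Real.tanh a) * (Real.tanh b + Real.tanh a) := by
    rw [tanhDeriv, tanhDeriv]; ring
  rw [h1, abs_mul]
  have h2 : |Real.tanh b - Real.tanh a| ≤ |a - b| := by
    rw [abs_sub_comm]; exact tanh_lipschitz a b
  have h3 : |Real.tanh b + Real.tanh a| ≤ 2 := by
    calc |Real.tanh b + Real.tanh a| ≤ |Real.tanh b| + |Real.tanh a| := abs_add_le _ _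
    _ ≤ 2 := by linarith [abs_tanh_le a, abs_tanh_le b]
  calc |Real.tanh b - Real.tanh a| * |Real.tanh b + Real.tanh a|
      ≤ |a - b| * 2 := mul_le_mul h2 h3 (abs_nonneg _) (abs_nonneg _)
    _ = 2 * |a - b| := by ring

lemma diag_norm_le {n : ℕ} (v : Fin n → ℝ) (C : ℝ) (hC : 0 ≤ C)
    (hv : ∀ i, |v i| ≤ C) :
    ‖Matrix.toEuclideanCLM (𝕜 := ℝ) (Matrix.diagonal v)‖ ≤ C := by
  apply ContinuousLinearMap.opNorm_le_bound _ hC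
  intro u
  have happ : ∀ i, (Matrix.toEuclideanCLM (𝕜 := ℝ) (Matrix.diagonal v) u) i
      = v i * u i := by
    intro i
    have := congrFun (Matrix.ofLp_toEuclideanCLM (𝕜 := ℝ)
      (Matrix.diagonal v) u) i
    simpa [Matrix.toLin'_apply, Matrix.mulVec_diagonal] using this
  rw [EuclideanSpace.norm_eq, EuclideanSpace.norm_eq]
  rw [← Real.sqrt_sq hC, ← Real.sqrt_mul (by positivity)]
  apply Real.sqrt_le_sqrt
  rw [Finset.mul_sum]
  apply Finset.sum_le_sum
  intro i _
  rw [happ i]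
  have : ‖v i * u i‖ = |v i| * ‖u i‖ := by
    simp [abs_mul, Real.norm_eq_abs]
  rw [this, mul_pow]
  gcongr
  exact hv i

lemma coord_le_norm {n : ℕ} (u : EuclideanSpace ℝ (Fin n)) (i : Fin n) :
    |u i| ≤ ‖u‖ := by
  rw [EuclideanSpace.norm_eq, ← Real.sqrt_sq (abs_nonneg (u i))]
  apply Real.sqrt_le_sqrt
  calc |u i| ^ 2 = ‖u i‖ ^ 2 := by rw [Real.norm_eq_abs]
    _ ≤ ∑ j, ‖u j‖ ^ 2 :=
      Finset.single_le_sum (f := fun j => ‖u j‖ ^ 2)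
        (fun j _ => by positivity) (Finset.mem_univ i)

/-- If `‖W‖ ≤ λ`, then the state-Jacobian
`D(h) = diag(tanh'(W h + U x)) W` of the tanh-RNN is `2λ²`-Lipschitz in the
state: `‖D(h) − D(h')‖ ≤ 2λ²‖h − h'‖` for all `h, h'` and all `x`. -/
theorem stmt_2 (n d : ℕ) (lam : ℝ)
    (W : EuclideanSpace ℝ (Fin n) →L[ℝ] EuclideanSpace ℝ (Fin n))
    (U : EuclideanSpace ℝ (Fin d) →L[ℝ] EuclideanSpace ℝ (Fin n))
    (hW : ‖W‖ ≤ lam) :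
    ∀ (h h' : EuclideanSpace ℝ (Fin n)) (x : EuclideanSpace ℝ (Fin d)),
      ‖rnnJacobian W U h x - rnnJacobian W U h' x‖ ≤ 2 * lam ^ 2 * ‖h - h'‖ := by
  intro h h' x
  have hlam : 0 ≤ lam := (norm_nonneg W).trans hW
  set a : Fin n → ℝ := fun i => tanhDeriv ((W h + U x) i) with ha
  set b : Fin n → ℝ := fun i => tanhDeriv ((W h' + U x) i) with hb
  have hdiff : rnnJacobian W U h x - rnnJacobian W U h' x
      = (Matrix.toEuclideanCLM (𝕜 := ℝ) (Matrix.diagonal (a - b))).comp W := by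
    rw [rnnJacobian, rnnJacobian, ← ContinuousLinearMap.sub_comp, ← map_sub,
      Matrix.diagonal_sub]
    rfl
  rw [hdiff]
  have hbound : ∀ i, |(a - b) i| ≤ 2 * lam * ‖h - h'‖ := by
    intro i
    have h1 : (W h + U x) i - (W h' + U x) i = (W (h - h')) i := by
      simp [map_sub]
    calc |(a - b) i| = |tanhDeriv ((W h + U x) i) - tanhDeriv ((W h' + U x) i)| := rfl
      _ ≤ 2 * |(W h + U x) i - (W h' + U x) i| := tanhDeriv_lipschitz _ _
      _ = 2 * |(W (h - h')) i| := by rw [h1]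
      _ ≤ 2 * ‖W (h - h')‖ := by
          have := coord_le_norm (W (h - h')) i
          linarith
      _ ≤ 2 * (lam * ‖h - h'‖) := by
          have h2 : ‖W (h - h')‖ ≤ ‖W‖ * ‖h - h'‖ := W.le_opNorm _
          have h3 : ‖W‖ * ‖h - h'‖ ≤ lam * ‖h - h'‖ :=
            mul_le_mul_of_nonneg_right hW (norm_nonneg _)
          linarith
      _ = 2 * lam * ‖h - h'‖ := by ring
  calc ‖(Matrix.toEuclideanCLM (𝕜 := ℝ) (Matrix.diagonal (a - b))).comp W‖
      ≤ ‖Matrix.toEuclideanCLM (𝕜 := ℝ) (Matrix.diagonal (a - b))‖ * ‖W‖ :=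
        ContinuousLinearMap.opNorm_comp_le _ _
    _ ≤ (2 * lam * ‖h - h'‖) * lam := by
        apply mul_le_mul (diag_norm_le _ _ (by positivity) hbound) hW
          (norm_nonneg _) (by positivity)
    _ = 2 * lam ^ 2 * ‖h - h'‖ := by ring
end

section
/- Consider the LSTM recursion f_t = σ(W_f h_{t−1} + U_f x_t), i_t = σ(W_i h_{t−1} + U_i x_t), o_t = σ(W_o h_{t−1} + U_o x_t), z_t = tanh(W_z h_{t−1} + U_z x_t), c_t = i_t ∘ z_t + f_t ∘ c_{t−1}, h_t = o_t ∘ tanh(c_t), with initial state c_0 = h_0 = 0. Suppose ‖W_f‖_∞ ≤ B_W < ∞, ‖U_f‖_∞ ≤ B_U < ∞, and all inputs satisfy ‖x_t‖_∞ ≤ B_x. Then: (i) ‖h_t‖_∞ ≤ 1 for all t; (ii) ‖f_t‖_∞ ≤ σ(B_W + B_U B_x) < 1 for all t, so f_∞ := sup_t ‖f_t‖_∞ < 1; and (iii) ‖c_t‖_∞ ≤ 1/(1 − f_∞) for all t. -/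
/-!
The forget gate is a sigmoid of a pre-activation `W_f h_{t-1} + U_f x_t` whose entries are at most
`B_W ‖h_{t-1}‖_∞ + B_U ‖x_t‖_∞ ≤ B_W + B_U B_x`, because every gate lies in `(0, 1)` and `|tanh| ≤ 1`
force `‖h‖_∞ ≤ 1`; monotonicity of `σ` then bounds `f_t` uniformly by `σ(B_W + B_U B_x) < 1`.
The cell state obeys `‖c_t‖_∞ ≤ 1 + f_∞ ‖c_{t-1}‖_∞`, and `1/(1 - f_∞)` is the fixed point of
this affine contraction, so the bound propagates from `c_0 = 0`.
-/

/-- The logistic sigmoid `σ(z) = 1/(1 + e^{−z})`. -/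
noncomputable def sigmoid (z : ℝ) : ℝ := 1 / (1 + Real.exp (-z))

open Matrix

lemma sigmoid_eq_real_sigmoid : sigmoid = Real.sigmoid := by
  funext z
  rw [sigmoid, Real.sigmoid_def, one_div]

section SupNorm

variable {ι : Type*} [Fintype ι]

lemma norm_comp_le_of_abs_le {g : ℝ → ℝ} {C : ℝ} (hC : 0 ≤ C) (hg : ∀ y, |g y| ≤ C)
    (v : ι → ℝ) : ‖fun j => g (v j)‖ ≤ C :=
  (pi_norm_le_iff_of_nonneg hC).2 fun j => hg (v j)

lemma norm_sigmoid_comp_le_one (v : ι → ℝ) : ‖fun j => sigmoid (v j)‖ ≤ 1 :=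
  norm_comp_le_of_abs_le zero_le_one (fun y => by
    rw [sigmoid_eq_real_sigmoid, abs_of_pos (Real.sigmoid_pos y)]
    exact Real.sigmoid_le_one y) v

lemma norm_tanh_comp_le_one (v : ι → ℝ) : ‖fun j => Real.tanh (v j)‖ ≤ 1 :=
  norm_comp_le_of_abs_le zero_le_one (fun y => (Real.abs_tanh_lt_one y).le) v

lemma norm_sigmoid_comp_mul_tanh_comp_le_one (u v : ι → ℝ) :
    ‖(fun j => sigmoid (u j)) * fun j => Real.tanh (v j)‖ ≤ 1 :=
  (norm_mul_le _ _).trans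
    (mul_le_one₀ (norm_sigmoid_comp_le_one u) (norm_nonneg _) (norm_tanh_comp_le_one v))

lemma norm_sigmoid_comp_le {v : ι → ℝ} {B : ℝ} (hv : ∀ j, |v j| ≤ B) :
    ‖fun j => sigmoid (v j)‖ ≤ sigmoid B := by
  rw [sigmoid_eq_real_sigmoid]
  refine (pi_norm_le_iff_of_nonneg (Real.sigmoid_nonneg B)).2 fun j => ?_
  rw [Real.norm_eq_abs, abs_of_pos (Real.sigmoid_pos _)]
  exact Real.sigmoid_le ((le_abs_self _).trans (hv j))

end SupNorm

lemma abs_mulVec_apply_le {ι κ : Type*} [Fintype κ] {W : Matrix ι κ ℝ} {v : κ → ℝ} {B C : ℝ}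
    (hW : ∀ j, ∑ l, |W j l| ≤ B) (hv : ‖v‖ ≤ C) (j : ι) : |(W *ᵥ v) j| ≤ B * C := by
  have hB : 0 ≤ B := (Finset.sum_nonneg fun l _ => abs_nonneg (W j l)).trans (hW j)
  calc |(W *ᵥ v) j| = |∑ l, W j l * v l| := rfl
    _ ≤ ∑ l, |W j l| * ‖v‖ := by
      refine (Finset.abs_sum_le_sum_abs _ _).trans (Finset.sum_le_sum fun l _ => ?_)
      rw [abs_mul, ← Real.norm_eq_abs (v l)]
      exact mul_le_mul_of_nonneg_left (norm_le_pi_norm v l) (abs_nonneg _)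
    _ = (∑ l, |W j l|) * ‖v‖ := (Finset.sum_mul _ _ _).symm
    _ ≤ B * C := mul_le_mul (hW j) hv (norm_nonneg v) hB

/-- `a / (1 - F)` is the fixed point of `u ↦ a + F u`, so it is preserved by the recursion. -/
lemma le_div_one_sub_of_le_add_mul {u : ℕ → ℝ} {a F : ℝ} (hF0 : 0 ≤ F) (hF1 : F < 1)
    (h0 : u 0 ≤ a / (1 - F)) (hstep : ∀ t, u (t + 1) ≤ a + F * u t) (t : ℕ) :
    u t ≤ a / (1 - F) := by
  induction t with
  | zero => exact h0
  | succ t ih =>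
    have hfix : a + F * (a / (1 - F)) = a / (1 - F) := by
      field_simp [(sub_pos.2 hF1).ne']
      ring
    calc u (t + 1) ≤ a + F * u t := hstep t
      _ ≤ a + F * (a / (1 - F)) := by gcongr
      _ = a / (1 - F) := hfix

/-- For the LSTM recursion with `c_0 = h_0 = 0`, if the forget-gate
matrices have induced `ℓ∞` norms (max absolute row sums) bounded by
`B_W` and `B_U` and all inputs satisfy `‖x_t‖_∞ ≤ B_x`, then
(i) `‖h_t‖_∞ ≤ 1`, (ii) `‖f_t‖_∞ ≤ σ(B_W + B_U B_x) < 1` so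
`f_∞ := sup_t ‖f_t‖_∞ < 1`, and (iii) `‖c_t‖_∞ ≤ 1/(1 − f_∞)`.
Vectors in `Fin dd → ℝ` carry the sup (`ℓ∞`) norm. -/
theorem stmt_3 (dd nn : ℕ) (BW BU Bx : ℝ)
    (Wf Wi Wo Wz : Matrix (Fin dd) (Fin dd) ℝ)
    (Uf Ui Uo Uz : Matrix (Fin dd) (Fin nn) ℝ)
    (hWf : ∀ j, ∑ l, |Wf j l| ≤ BW)          -- ‖W_f‖_∞ ≤ B_W
    (hUf : ∀ j, ∑ l, |Uf j l| ≤ BU)          -- ‖U_f‖_∞ ≤ B_U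
    (x : ℕ → (Fin nn → ℝ)) (hx : ∀ t, ‖x t‖ ≤ Bx)
    (f i o z c h : ℕ → (Fin dd → ℝ))
    (hc0 : c 0 = 0) (hh0 : h 0 = 0)
    (hf : ∀ t, f (t + 1) = fun j => sigmoid ((Wf.mulVec (h t) + Uf.mulVec (x (t + 1))) j))
    (hi : ∀ t, i (t + 1) = fun j => sigmoid ((Wi.mulVec (h t) + Ui.mulVec (x (t + 1))) j))
    (ho : ∀ t, o (t + 1) = fun j => sigmoid ((Wo.mulVec (h t) + Uo.mulVec (x (t + 1))) j))
    (hz : ∀ t, z (t + 1) = fun j => Real.tanh ((Wz.mulVec (h t) + Uz.mulVec (x (t + 1))) j))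
    (hc : ∀ t, c (t + 1) = i (t + 1) * z (t + 1) + f (t + 1) * c t)
    (hh : ∀ t, h (t + 1) = o (t + 1) * fun j => Real.tanh (c (t + 1) j)) :
    (∀ t, ‖h t‖ ≤ 1) ∧
    ((∀ t, ‖f (t + 1)‖ ≤ sigmoid (BW + BU * Bx)) ∧ sigmoid (BW + BU * Bx) < 1) ∧
    ((⨆ t, ‖f (t + 1)‖) < 1 ∧ ∀ t, ‖c t‖ ≤ 1 / (1 - ⨆ t, ‖f (t + 1)‖)) := by
  have hh_le : ∀ t, ‖h t‖ ≤ 1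
    | 0 => by simp [hh0]
    | t + 1 => by
      rw [hh t, ho t]
      exact norm_sigmoid_comp_mul_tanh_comp_le_one _ _
  have hf_le : ∀ t, ‖f (t + 1)‖ ≤ sigmoid (BW + BU * Bx) := fun t => by
    rw [hf t]
    refine norm_sigmoid_comp_le fun j => (abs_add_le _ _).trans ?_
    simpa only [mul_one] using
      add_le_add (abs_mulVec_apply_le hWf (hh_le t) j) (abs_mulVec_apply_le hUf (hx (t + 1)) j)
  have hσ_lt : sigmoid (BW + BU * Bx) < 1 := by
    rw [sigmoid_eq_real_sigmoid]
    exact Real.sigmoid_lt_one _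
  have hbdd : BddAbove (Set.range fun t => ‖f (t + 1)‖) := ⟨_, Set.forall_mem_range.2 hf_le⟩
  set F := ⨆ t, ‖f (t + 1)‖
  have hF_lt : F < 1 := (ciSup_le hf_le).trans_lt hσ_lt
  refine ⟨hh_le, ⟨hf_le, hσ_lt⟩, hF_lt, ?_⟩
  refine le_div_one_sub_of_le_add_mul (Real.iSup_nonneg fun _ => norm_nonneg _) hF_lt
    (by simp [hc0, (sub_pos.2 hF_lt).le]) fun t => ?_
  have hiz : ‖i (t + 1) * z (t + 1)‖ ≤ 1 := by
    rw [hi t, hz t]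
    exact norm_sigmoid_comp_mul_tanh_comp_le_one _ _
  calc ‖c (t + 1)‖ ≤ ‖i (t + 1) * z (t + 1)‖ + ‖f (t + 1)‖ * ‖c t‖ := by
        rw [hc t]
        exact (norm_add_le _ _).trans (add_le_add_right (norm_mul_le _ _) _)
    _ ≤ 1 + F * ‖c t‖ := by gcongr; exact le_ciSup hbdd t
end

section
/- Let φ : ℝ^n × ℝ^d → ℝ^n be λ-contractive in its state argument with λ < 1, be L_x-Lipschitz in its input argument, and satisfy φ(0, 0) = 0, and let f : ℝ^n → ℝ^p be L_f-Lipschitz. Let inputs x_1, …, x_T satisfy ‖x_t‖ ≤ B_x, let h_t and h_t^k be the full and truncated hidden states, and let y_t = f(h_t), y_t^k = f(h_t^k). Then for any ε > 0, if the truncation length satisfies k ≥ log_{1/λ}(L_f L_x B_x / ((1 − λ)ε)), then ‖y_t − y_t^k‖ ≤ ε for all t ≥ k. -/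
/-!
Contractivity in the state makes the recurrence forget its initial condition geometrically:
after the `k` common steps from `t - k` to `t`, the full and truncated states differ by at most
`λ ^ k` times their gap at `t - k`, which is `‖h (t - k)‖`. The hidden states stay in the ball of
radius `L_x B_x / (1 - λ)`, since `‖φ h x‖ ≤ λ ‖h‖ + L_x ‖x‖` and this ball is invariant. The
choice of `k` makes `L_f λ ^ k L_x B_x / (1 - λ) ≤ ε`.
-/

section Recurrence

variable {E X : Type*} [SeminormedAddCommGroup E] {φ : E → X → E} {lam Lx : ℝ}

theorem norm_sub_trajectory_le_of_contractive (hlam0 : 0 ≤ lam)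
    (hcontract : ∀ h h' x, ‖φ h x - φ h' x‖ ≤ lam * ‖h - h'‖)
    {x : ℕ → X} {h g : ℕ → E} {a j : ℕ}
    (hrec : ∀ s, a ≤ s → s < a + j → h (s + 1) = φ (h s) (x (s + 1)))
    (grec : ∀ s, a ≤ s → s < a + j → g (s + 1) = φ (g s) (x (s + 1))) :
    ‖h (a + j) - g (a + j)‖ ≤ lam ^ j * ‖h a - g a‖ := by
  induction j with
  | zero => simp
  | succ j ih =>
    have ih := ih (fun s ha _ => hrec s ha (by omega)) (fun s ha _ => grec s ha (by omega))
    rw [← add_assoc, hrec _ (by omega) (by omega), grec _ (by omega) (by omega)]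
    calc ‖φ (h (a + j)) (x (a + j + 1)) - φ (g (a + j)) (x (a + j + 1))‖
        ≤ lam * ‖h (a + j) - g (a + j)‖ := hcontract _ _ _
      _ ≤ lam * (lam ^ j * ‖h a - g a‖) := by gcongr
      _ = lam ^ (j + 1) * ‖h a - g a‖ := by ring

variable [SeminormedAddCommGroup X]

theorem norm_apply_le_of_contractive
    (hcontract : ∀ h h' x, ‖φ h x - φ h' x‖ ≤ lam * ‖h - h'‖)
    (hlip : ∀ h x x', ‖φ h x - φ h x'‖ ≤ Lx * ‖x - x'‖) (hzero : φ 0 0 = 0) (h : E) (x : X) :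
    ‖φ h x‖ ≤ lam * ‖h‖ + Lx * ‖x‖ := by
  calc ‖φ h x‖ = ‖(φ h x - φ 0 x) + (φ 0 x - φ 0 0)‖ := by rw [hzero]; abel_nf
    _ ≤ ‖φ h x - φ 0 x‖ + ‖φ 0 x - φ 0 0‖ := norm_add_le _ _
    _ ≤ lam * ‖h - 0‖ + Lx * ‖x - 0‖ := add_le_add (hcontract _ _ _) (hlip _ _ _)
    _ = lam * ‖h‖ + Lx * ‖x‖ := by simp only [sub_zero]

theorem norm_trajectory_le_of_contractive {Bx : ℝ} (hlam0 : 0 ≤ lam) (hlam1 : lam < 1)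
    (hLx : 0 ≤ Lx) (hBx : 0 ≤ Bx)
    (hcontract : ∀ h h' x, ‖φ h x - φ h' x‖ ≤ lam * ‖h - h'‖)
    (hlip : ∀ h x x', ‖φ h x - φ h x'‖ ≤ Lx * ‖x - x'‖) (hzero : φ 0 0 = 0)
    {T : ℕ} {x : ℕ → X} (hx : ∀ s, 1 ≤ s → s ≤ T → ‖x s‖ ≤ Bx)
    {h : ℕ → E} (h0 : h 0 = 0) (hrec : ∀ s, s < T → h (s + 1) = φ (h s) (x (s + 1))) :
    ∀ s ≤ T, ‖h s‖ ≤ Lx * Bx / (1 - lam) := by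
  have hgap : 0 < 1 - lam := sub_pos.mpr hlam1
  intro s
  induction s with
  | zero => intro _; rw [h0, norm_zero]; positivity
  | succ s ih =>
    intro hsT
    have hs := ih (by omega)
    have hxs := hx (s + 1) (by omega) hsT
    rw [hrec s (by omega)]
    calc ‖φ (h s) (x (s + 1))‖ ≤ lam * ‖h s‖ + Lx * ‖x (s + 1)‖ :=
          norm_apply_le_of_contractive hcontract hlip hzero _ _
      _ ≤ lam * (Lx * Bx / (1 - lam)) + Lx * Bx := by gcongr
      _ = Lx * Bx / (1 - lam) := by field_simp; ring

end Recurrence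

theorem pow_mul_le_one_of_logb_inv_le {lam M : ℝ} {k : ℕ} (hlam0 : 0 < lam) (hlam1 : lam < 1)
    (hk : Real.logb (1 / lam) M ≤ k) : lam ^ k * M ≤ 1 := by
  have hpow : 0 < lam ^ k := pow_pos hlam0 k
  rcases le_or_gt M 0 with hM | hM
  · nlinarith
  have hbase : 1 < 1 / lam := by rw [lt_div_iff₀ hlam0]; linarith
  have hMle : M ≤ (lam ^ k)⁻¹ := by
    rwa [Real.logb_le_iff_le_rpow hbase hM, Real.rpow_natCast, one_div, inv_pow] at hk
  calc lam ^ k * M ≤ lam ^ k * (lam ^ k)⁻¹ := by gcongr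
    _ = 1 := mul_inv_cancel₀ hpow.ne'

/-- inference-time approximation. If `φ` is `λ`-contractive in the
state (`0 < λ < 1`), `L_x`-Lipschitz in the input, `φ(0,0) = 0`, the prediction
map `f` is `L_f`-Lipschitz, inputs are bounded by `B_x`, and the truncation
length satisfies `k ≥ log_{1/λ}(L_f L_x B_x/((1 − λ)ε))`, then the full and
truncated predictions satisfy `‖y_t − y_t^k‖ ≤ ε` (for `t ≥ k`). -/
theorem stmt_8 (n d p T k t : ℕ) (lam Lx Bx Lf : ℝ)
    (hlam0 : 0 < lam) (hlam1 : lam < 1) (hLx : 0 ≤ Lx) (hBx : 0 ≤ Bx) (hLf : 0 ≤ Lf)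
    (φ : EuclideanSpace ℝ (Fin n) → EuclideanSpace ℝ (Fin d) → EuclideanSpace ℝ (Fin n))
    (hcontract : ∀ h h' x, ‖φ h x - φ h' x‖ ≤ lam * ‖h - h'‖)
    (hlip : ∀ h x x', ‖φ h x - φ h x'‖ ≤ Lx * ‖x - x'‖)
    (hzero : φ 0 0 = 0)
    (f : EuclideanSpace ℝ (Fin n) → EuclideanSpace ℝ (Fin p))
    (hf : ∀ h h', ‖f h - f h'‖ ≤ Lf * ‖h - h'‖)
    (x : ℕ → EuclideanSpace ℝ (Fin d)) (hx : ∀ s, 1 ≤ s → s ≤ T → ‖x s‖ ≤ Bx)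
    (h : ℕ → EuclideanSpace ℝ (Fin n)) (h0 : h 0 = 0)
    (hrec : ∀ s, s < T → h (s + 1) = φ (h s) (x (s + 1)))
    (hk : ℕ → EuclideanSpace ℝ (Fin n)) (hkt : k ≤ t) (htT : t ≤ T)
    (hk0 : hk (t - k) = 0)
    (hkrec : ∀ s, t - k ≤ s → s < t → hk (s + 1) = φ (hk s) (x (s + 1)))
    (ε : ℝ) (hε : 0 < ε)
    (hklarge : (k : ℝ) ≥ Real.logb (1 / lam) (Lf * Lx * Bx / ((1 - lam) * ε))) :
    ‖f (h t) - f (hk t)‖ ≤ ε := by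
  have hstart : ‖h (t - k)‖ ≤ Lx * Bx / (1 - lam) :=
    norm_trajectory_le_of_contractive hlam0.le hlam1 hLx hBx hcontract hlip hzero hx h0 hrec _
      (by omega)
  have hforget : ‖h t - hk t‖ ≤ lam ^ k * ‖h (t - k)‖ := by
    have := norm_sub_trajectory_le_of_contractive hlam0.le hcontract (a := t - k) (j := k)
      (fun s _ _ => hrec s (by omega)) (fun s ha _ => hkrec s ha (by omega))
    rwa [Nat.sub_add_cancel hkt, hk0, sub_zero] at this
  have hsmall := pow_mul_le_one_of_logb_inv_le hlam0 hlam1 hklarge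
  have hgap : 0 < 1 - lam := sub_pos.mpr hlam1
  calc ‖f (h t) - f (hk t)‖ ≤ Lf * ‖h t - hk t‖ := hf _ _
    _ ≤ Lf * (lam ^ k * (Lx * Bx / (1 - lam))) := by gcongr; exact hforget.trans (by gcongr)
    _ = lam ^ k * (Lf * Lx * Bx / ((1 - lam) * ε)) * ε := by field_simp
    _ ≤ ε := by nlinarith
end

section
/- Let φ_w, φ_{w'} : ℝ^n × ℝ^d → ℝ^n be two recurrent maps (the same parameterized model φ at parameters w and w'), each λ-contractive in its state argument with λ < 1, and suppose the model is L_w-Lipschitz in its parameters: ‖φ_w(h, x) − φ_{w'}(h, x)‖ ≤ L_w‖w − w'‖ for all states h and inputs x. Let h_t(w) and h_t(w') be the hidden states obtained by running the two models on a common input sequence x_1, …, x_T from a common initial state h_0(w) = h_0(w'). Then for all t, ‖h_t(w) − h_t(w')‖ ≤ L_w‖w − w'‖/(1 − λ). -/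
/-- parameter perturbation of the trajectory. If `φ_w` and
`φ_{w'}` are both `λ`-contractive in the state (`λ < 1`) and the model is
`L_w`-Lipschitz in parameters, then running both models on a common input
sequence from a common initial state gives
`‖h_t(w) − h_t(w')‖ ≤ L_w‖w − w'‖/(1 − λ)` for all `t`. -/
theorem stmt_9 (n d m T : ℕ) (lam Lw : ℝ) (hlam0 : 0 ≤ lam) (hlam1 : lam < 1)
    (φ : EuclideanSpace ℝ (Fin m) → EuclideanSpace ℝ (Fin n) →
      EuclideanSpace ℝ (Fin d) → EuclideanSpace ℝ (Fin n))
    (w w' : EuclideanSpace ℝ (Fin m))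
    (hcontract : ∀ h h' x, ‖φ w h x - φ w h' x‖ ≤ lam * ‖h - h'‖)
    (hcontract' : ∀ h h' x, ‖φ w' h x - φ w' h' x‖ ≤ lam * ‖h - h'‖)
    (hparamLip : ∀ h x, ‖φ w h x - φ w' h x‖ ≤ Lw * ‖w - w'‖)
    (x : ℕ → EuclideanSpace ℝ (Fin d))
    (h h' : ℕ → EuclideanSpace ℝ (Fin n)) (h0 : h 0 = h' 0)
    (hrec : ∀ t, t < T → h (t + 1) = φ w (h t) (x (t + 1)))
    (hrec' : ∀ t, t < T → h' (t + 1) = φ w' (h' t) (x (t + 1))) :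
    ∀ t, t ≤ T → ‖h t - h' t‖ ≤ Lw * ‖w - w'‖ / (1 - lam) := by
  have hpos : (0:ℝ) < 1 - lam := by linarith
  have hC : 0 ≤ Lw * ‖w - w'‖ := le_trans (norm_nonneg _) (hparamLip (h 0) (x 0))
  intro t
  induction t with
  | zero => intro _; rw [h0]; simp; positivity
  | succ t ih =>
    intro hle
    have ht : t < T := Nat.lt_of_succ_le hle
    have ih' := ih (le_of_lt ht)
    rw [hrec t ht, hrec' t ht]
    have key : ‖φ w (h t) (x (t+1)) - φ w' (h' t) (x (t+1))‖ ≤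
        lam * ‖h t - h' t‖ + Lw * ‖w - w'‖ := by
      calc ‖φ w (h t) (x (t+1)) - φ w' (h' t) (x (t+1))‖
          ≤ ‖φ w (h t) (x (t+1)) - φ w (h' t) (x (t+1))‖ +
            ‖φ w (h' t) (x (t+1)) - φ w' (h' t) (x (t+1))‖ := by
            have := norm_sub_le_norm_sub_add_norm_sub (φ w (h t) (x (t+1)))
              (φ w (h' t) (x (t+1))) (φ w' (h' t) (x (t+1)))
            exact this
        _ ≤ lam * ‖h t - h' t‖ + Lw * ‖w - w'‖ :=
            add_le_add (hcontract _ _ _) (hparamLip _ _)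
    have : lam * ‖h t - h' t‖ ≤ lam * (Lw * ‖w - w'‖ / (1 - lam)) :=
      mul_le_mul_of_nonneg_left ih' hlam0
    have hfinal : lam * (Lw * ‖w - w'‖ / (1 - lam)) + Lw * ‖w - w'‖ =
        Lw * ‖w - w'‖ / (1 - lam) := by field_simp; ring
    linarith
end

section
/- Let α ≥ 0, β ≥ 0, c ≥ 0, and let δ_0, δ_1, …, δ_N be nonnegative reals with δ_0 = 0 satisfying the recurrence δ_i ≤ exp(αβ/i)·δ_{i−1} + αc/i for each 1 ≤ i ≤ N. Then δ_N ≤ α c N^{αβ + 1}. -/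
/-! The bound `δ_n ≤ αc·n^{αβ+1}` propagates through the recurrence by induction on `n`. With
`γ = αβ`, the inductive step reduces to `exp(γ/(n+1))·n^{γ+1} + 1/(n+1) ≤ (n+1)^{γ+1}`, which
follows from `exp(1/(n+1))·n ≤ n+1`, i.e. from `1 - t ≤ exp(-t)` at `t = 1/(n+1)`. -/

open Real

lemma Real.exp_inv_add_one_mul_le {x : ℝ} (hx : 0 ≤ x) : exp (1 / (x + 1)) * x ≤ x + 1 := by
  have hx1 : 0 < x + 1 := by linarith
  have h : x / (x + 1) ≤ exp (-(1 / (x + 1))) := by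
    calc x / (x + 1) = -(1 / (x + 1)) + 1 := by field_simp; ring
      _ ≤ exp (-(1 / (x + 1))) := add_one_le_exp _
  rw [exp_neg, div_le_iff₀ hx1, inv_mul_eq_div, le_div_iff₀ (exp_pos _)] at h
  linarith

lemma Real.exp_div_add_one_mul_rpow_le {x γ : ℝ} (hx : 0 ≤ x) (hγ : 0 ≤ γ) :
    exp (γ / (x + 1)) * x ^ γ ≤ (x + 1) ^ γ := by
  calc exp (γ / (x + 1)) * x ^ γ = (exp (1 / (x + 1)) * x) ^ γ := by
        rw [mul_rpow (exp_pos _).le hx, ← exp_mul]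
        ring_nf
    _ ≤ (x + 1) ^ γ := rpow_le_rpow (by positivity) (exp_inv_add_one_mul_le hx) hγ

lemma Real.exp_div_add_one_mul_rpow_add_one_add_inv_le {x γ : ℝ} (hx : 0 ≤ x) (hγ : 0 ≤ γ) :
    exp (γ / (x + 1)) * x ^ (γ + 1) + 1 / (x + 1) ≤ (x + 1) ^ (γ + 1) := by
  have hx1 : 0 < x + 1 := by linarith
  have hγ1 : γ + 1 ≠ 0 := by linarith
  have hinv : 1 / (x + 1) ≤ (x + 1) ^ γ :=
    ((div_le_one hx1).2 (by linarith)).trans (one_le_rpow (by linarith) hγ)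
  rw [rpow_add_one' hx hγ1, rpow_add_one' hx1.le hγ1, ← mul_assoc]
  nlinarith [exp_div_add_one_mul_rpow_le hx hγ]

theorem le_mul_rpow_of_le_exp_mul_add {N : ℕ} {γ K : ℝ} (hγ : 0 ≤ γ) (hK : 0 ≤ K)
    {δ : ℕ → ℝ} (hδ0 : δ 0 ≤ 0)
    (hrec : ∀ i, 1 ≤ i → i ≤ N → δ i ≤ exp (γ / i) * δ (i - 1) + K / i) :
    ∀ n ≤ N, δ n ≤ K * (n : ℝ) ^ (γ + 1) := by
  intro n
  induction n with
  | zero =>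
    intro _
    simpa [zero_rpow (by linarith : γ + 1 ≠ 0)] using hδ0
  | succ n ih =>
    intro hn
    have hstep := hrec (n + 1) (by omega) hn
    rw [Nat.add_sub_cancel, Nat.cast_succ] at hstep
    rw [Nat.cast_succ]
    calc δ (n + 1) ≤ exp (γ / (n + 1)) * (K * (n : ℝ) ^ (γ + 1)) + K / (n + 1) :=
          hstep.trans (by gcongr; exact ih (by omega))
      _ = K * (exp (γ / (n + 1)) * (n : ℝ) ^ (γ + 1) + 1 / (n + 1)) := by ring
      _ ≤ K * ((n : ℝ) + 1) ^ (γ + 1) := by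
          gcongr
          exact exp_div_add_one_mul_rpow_add_one_add_inv_le n.cast_nonneg hγ

theorem stmt_14_general (N : ℕ) (α β c : ℝ)
    (hα : 0 ≤ α) (hβ : 0 ≤ β) (hc : 0 ≤ c)
    (δ : ℕ → ℝ) (hδ0 : δ 0 = 0)
    (hrec : ∀ i, 1 ≤ i → i ≤ N →
      δ i ≤ Real.exp (α * β / i) * δ (i - 1) + α * c / i) :
    δ N ≤ α * c * (N : ℝ) ^ (α * β + 1) :=
  le_mul_rpow_of_le_exp_mul_add (mul_nonneg hα hβ) (mul_nonneg hα hc) hδ0.le hrec N le_rfl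

/-- the gradient-descent divergence recurrence. If `δ_0 = 0`,
`δ_i ≥ 0`, and `δ_i ≤ exp(αβ/i)·δ_{i−1} + αc/i` for `1 ≤ i ≤ N`, then
`δ_N ≤ α c N^{αβ + 1}`. -/
theorem stmt_14 (N : ℕ) (hN : 1 ≤ N) (α β c : ℝ)
    (hα : 0 ≤ α) (hβ : 0 ≤ β) (hc : 0 ≤ c)
    (δ : ℕ → ℝ) (hδ0 : δ 0 = 0) (hδnonneg : ∀ i, i ≤ N → 0 ≤ δ i)
    (hrec : ∀ i, 1 ≤ i → i ≤ N →
      δ i ≤ Real.exp (α * β / i) * δ (i - 1) + α * c / i) :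
    δ N ≤ α * c * (N : ℝ) ^ (α * β + 1) :=
  stmt_14_general N α β c hα hβ hc δ hδ0 hrec
end

section
/- Let Θ ⊆ ℝ^m be a nonempty compact convex set and let Π_Θ denote Euclidean projection onto Θ. Let g, g^k : Θ → ℝ^m be two gradient maps satisfying, for all u, v ∈ Θ: ‖g(u) − g(v)‖ ≤ β‖u − v‖ (β-smoothness of the objective) and ‖g(u) − g^k(u)‖ ≤ γ k λ^k (truncation error of the gradient), for constants β, γ ≥ 0, 0 < λ < 1, and integer k ≥ 1. Define two projected gradient descent sequences from a common initialization w^0_recurr = w^0_trunc ∈ Θ with step sizes α_i = α/i: w^i_recurr = Π_Θ(w^{i−1}_recurr − α_i g(w^{i−1}_recurr)) and w^i_trunc = Π_Θ(w^{i−1}_trunc − α_i g^k(w^{i−1}_trunc)) for i = 1, …, N. Then ‖w^N_recurr − w^N_trunc‖ ≤ α γ k λ^k N^{αβ + 1}. -/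
open InnerProductSpace

/-- Variational inequality for a nearest-point map onto a convex set. -/
lemma aux_var_ineq {F : Type*} [NormedAddCommGroup F] [InnerProductSpace ℝ F]
    {K : Set F} (hK : Convex ℝ K) (proj : F → F)
    (hmem : ∀ u, proj u ∈ K) (hnear : ∀ u, ∀ v ∈ K, ‖u - proj u‖ ≤ ‖u - v‖)
    (u : F) : ∀ w ∈ K, (⟪u - proj u, w - proj u⟫_ℝ) ≤ 0 := by
  haveI : Nonempty K := ⟨⟨proj u, hmem u⟩⟩
  have heq : ‖u - proj u‖ = ⨅ w : K, ‖u - w‖ := by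
    apply le_antisymm
    · exact le_ciInf fun w => hnear u w w.2
    · have hbdd : BddBelow (Set.range fun w : K => ‖u - (w : F)‖) :=
        ⟨0, by rintro _ ⟨w, rfl⟩; positivity⟩
      exact ciInf_le hbdd ⟨proj u, hmem u⟩
  exact (norm_eq_iInf_iff_real_inner_le_zero hK (hmem u)).1 heq

/-- Nonexpansiveness of a nearest-point map onto a convex set. -/
lemma aux_nonexp {F : Type*} [NormedAddCommGroup F] [InnerProductSpace ℝ F]
    {K : Set F} (hK : Convex ℝ K) (proj : F → F)
    (hmem : ∀ u, proj u ∈ K) (hnear : ∀ u, ∀ v ∈ K, ‖u - proj u‖ ≤ ‖u - v‖)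
    (u v : F) : ‖proj u - proj v‖ ≤ ‖u - v‖ := by
  set a := proj u
  set b := proj v
  have h1 : (⟪u - a, b - a⟫_ℝ) ≤ 0 := aux_var_ineq hK proj hmem hnear u b (hmem v)
  have h2 : (⟪v - b, a - b⟫_ℝ) ≤ 0 := aux_var_ineq hK proj hmem hnear v a (hmem u)
  have h3 : (0:ℝ) ≤ ⟪u - a, a - b⟫_ℝ := by
    have : ⟪u - a, a - b⟫_ℝ = -⟪u - a, b - a⟫_ℝ := by
      rw [show a - b = -(b - a) by abel, inner_neg_right]
    linarith [this]
  have h5 : ⟪u - v, a - b⟫_ℝ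
      = ⟪u - a, a - b⟫_ℝ - ⟪v - b, a - b⟫_ℝ + ⟪a - b, a - b⟫_ℝ := by
    rw [show u - v = (u - a) - (v - b) + (a - b) by abel, inner_add_left, inner_sub_left]
  have hsq : ‖a - b‖ ^ 2 ≤ ⟪u - v, a - b⟫_ℝ := by
    rw [← real_inner_self_eq_norm_sq]
    linarith
  have hcs : ⟪u - v, a - b⟫_ℝ ≤ ‖u - v‖ * ‖a - b‖ := real_inner_le_norm _ _
  rcases eq_or_lt_of_le (norm_nonneg (a - b)) with h | h
  · rw [← h]; exact norm_nonneg _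
  · have := le_trans hsq hcs
    rw [sq] at this
    exact le_of_mul_le_mul_right (by linarith) h

lemma aux_num {x c : ℝ} (hx : 1 ≤ x) (hc : 1 ≤ c) :
    x ^ (c + 1) + c * x ^ c + 1 ≤ (x + 1) ^ (c + 1) := by
  have hx0 : 0 < x := by linarith
  have bern : 1 + (c + 1) * (1 / x) ≤ (1 + 1 / x) ^ (c + 1) :=
    one_add_mul_self_le_rpow_one_add (by nlinarith [one_div_pos.mpr hx0]) (by linarith)
  have key : x ^ (c + 1) * (1 + (c + 1) * (1 / x)) ≤ x ^ (c + 1) * (1 + 1 / x) ^ (c + 1) :=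
    mul_le_mul_of_nonneg_left bern (Real.rpow_nonneg hx0.le _)
  have e1 : x ^ (c + 1) * (1 + 1 / x) ^ (c + 1) = (x + 1) ^ (c + 1) := by
    rw [← Real.mul_rpow hx0.le (by positivity)]
    congr 1
    field_simp
  have e2 : x ^ (c + 1) * (1 + (c + 1) * (1 / x)) = x ^ (c + 1) + (c + 1) * x ^ c := by
    have hxc1 : x ^ (c + 1) = x ^ c * x := by rw [Real.rpow_add hx0, Real.rpow_one]
    rw [hxc1]
    field_simp
  have hxc : 1 ≤ x ^ c := Real.one_le_rpow hx (by linarith)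
  rw [e1, e2] at key
  linarith

/-- projected gradient descent with the full and truncated
gradients stays close. If `g` is `β`-Lipschitz on `Θ`, `‖g − g^k‖ ≤ γkλ^k` on
`Θ`, and both sequences are run with step sizes `α/i` from a common
initialization, projecting onto the nonempty compact convex set `Θ` after each
step, then `‖w^N_recurr − w^N_trunc‖ ≤ αγkλ^k N^{αβ+1}`. -/
theorem stmt_15 (m N k : ℕ) (hN : 1 ≤ N) (hk : 1 ≤ k)
    (α β γ lam : ℝ) (hα : 0 ≤ α) (hβ : 0 ≤ β) (hγ : 0 ≤ γ)
    (hlam0 : 0 < lam) (hlam1 : lam < 1)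
    (Θ : Set (EuclideanSpace ℝ (Fin m)))
    (hne : Θ.Nonempty) (hcompact : IsCompact Θ) (hconvex : Convex ℝ Θ)
    (proj : EuclideanSpace ℝ (Fin m) → EuclideanSpace ℝ (Fin m))
    (hprojMem : ∀ u, proj u ∈ Θ)
    (hprojNear : ∀ u, ∀ v ∈ Θ, ‖u - proj u‖ ≤ ‖u - v‖)
    (g gk : EuclideanSpace ℝ (Fin m) → EuclideanSpace ℝ (Fin m))
    (hgLip : ∀ u ∈ Θ, ∀ v ∈ Θ, ‖g u - g v‖ ≤ β * ‖u - v‖)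
    (hgTrunc : ∀ u ∈ Θ, ‖g u - gk u‖ ≤ γ * k * lam ^ k)
    (wr wt : ℕ → EuclideanSpace ℝ (Fin m))
    (h0 : wr 0 = wt 0) (h0mem : wr 0 ∈ Θ)
    (hwr : ∀ i, 1 ≤ i → i ≤ N →
      wr i = proj (wr (i - 1) - (α / (i : ℝ)) • g (wr (i - 1))))
    (hwt : ∀ i, 1 ≤ i → i ≤ N →
      wt i = proj (wt (i - 1) - (α / (i : ℝ)) • gk (wt (i - 1)))) :
    ‖wr N - wt N‖ ≤ α * γ * k * lam ^ k * (N : ℝ) ^ (α * β + 1) := by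
  set E : ℝ := γ * k * lam ^ k with hEdef
  have hE : 0 ≤ E := by positivity
  set c : ℝ := α * β + 1 with hcdef
  have hc : 1 ≤ c := by nlinarith
  have hc0 : c ≠ 0 := ne_of_gt (lt_of_lt_of_le one_pos hc)
  clear_value E c
  have nonexp : ∀ u v, ‖proj u - proj v‖ ≤ ‖u - v‖ :=
    aux_nonexp hconvex proj hprojMem hprojNear
  have main : ∀ i, i ≤ N → wr i ∈ Θ ∧ wt i ∈ Θ ∧ ‖wr i - wt i‖ ≤ α * E * (i : ℝ) ^ c := by
    intro i
    induction i with
    | zero =>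
      intro _
      refine ⟨h0mem, h0 ▸ h0mem, ?_⟩
      rw [h0, sub_self, norm_zero]
      simp [Real.zero_rpow hc0]
    | succ i ih =>
      intro hiN
      obtain ⟨hrΘ, htΘ, hd⟩ := ih (by omega)
      have hwr' := hwr (i + 1) (by omega) hiN
      have hwt' := hwt (i + 1) (by omega) hiN
      simp only [Nat.add_sub_cancel] at hwr' hwt'
      refine ⟨hwr' ▸ hprojMem _, hwt' ▸ hprojMem _, ?_⟩
      set x : ℝ := (i : ℝ) with hxdef
      have hx0 : (0:ℝ) ≤ x := Nat.cast_nonneg i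
      have hcast : ((i + 1 : ℕ) : ℝ) = x + 1 := by push_cast; ring
      set s : ℝ := α / (x + 1) with hsdef
      have hs : 0 ≤ s := by positivity
      have step1 : ‖wr (i + 1) - wt (i + 1)‖ ≤
          ‖(wr i - wt i) - s • (g (wr i) - g (wt i)) - s • (g (wt i) - gk (wt i))‖ := by
        rw [hwr', hwt', hcast]
        refine le_trans (nonexp _ _) (le_of_eq ?_)
        congr 1
        module
      have step2 : ‖(wr i - wt i) - s • (g (wr i) - g (wt i)) - s • (g (wt i) - gk (wt i))‖
          ≤ (1 + s * β) * ‖wr i - wt i‖ + s * E := by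
        have t1 := norm_sub_le ((wr i - wt i) - s • (g (wr i) - g (wt i)))
          (s • (g (wt i) - gk (wt i)))
        have t2 := norm_sub_le (wr i - wt i) (s • (g (wr i) - g (wt i)))
        have n1 : ‖s • (g (wr i) - g (wt i))‖ ≤ s * (β * ‖wr i - wt i‖) := by
          rw [norm_smul, Real.norm_eq_abs, abs_of_nonneg hs]
          exact mul_le_mul_of_nonneg_left (hgLip _ hrΘ _ htΘ) hs
        have n2 : ‖s • (g (wt i) - gk (wt i))‖ ≤ s * E := by
          rw [norm_smul, Real.norm_eq_abs, abs_of_nonneg hs]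
          exact mul_le_mul_of_nonneg_left (hgTrunc _ htΘ) hs
        nlinarith [norm_nonneg (wr i - wt i)]
      have step3 : (1 + s * β) * ‖wr i - wt i‖ + s * E
          ≤ (1 + s * β) * (α * E * x ^ c) + s * E := by
        have : 0 ≤ 1 + s * β := by positivity
        nlinarith
      have hkey : x ^ c * (x + 1 + α * β) + 1 ≤ (x + 1) ^ (c + 1) := by
        rcases eq_or_lt_of_le hx0 with h | h
        · rw [← h]
          simp [Real.zero_rpow hc0, Real.one_rpow]
        · have hx1 : 1 ≤ x := by
            have hi : 0 < i := by rw [hxdef] at h; exact_mod_cast h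
            rw [hxdef]; exact_mod_cast hi
          have hnum := aux_num hx1 hc
          have hxc1 : x ^ (c + 1) = x ^ c * x := by
            rw [Real.rpow_add (by linarith), Real.rpow_one]
          have hceq : x + 1 + α * β = x + c := by rw [hcdef]; ring
          calc x ^ c * (x + 1 + α * β) + 1
              = x ^ (c + 1) + c * x ^ c + 1 := by rw [hceq, hxc1]; ring
            _ ≤ (x + 1) ^ (c + 1) := hnum
      have step4 : (1 + s * β) * (α * E * x ^ c) + s * E ≤ α * E * (x + 1) ^ c := by
        have ht : (0:ℝ) < x + 1 := by linarith
        have hsx : s * (x + 1) = α := by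
          rw [hsdef]; field_simp
        have e1 : ((1 + s * β) * (α * E * x ^ c) + s * E) * (x + 1)
            = α * E * (x ^ c * (x + 1 + α * β) + 1) := by
          linear_combination (β * α * E * x ^ c + E) * hsx
        have h2 : α * E * (x + 1) ^ c * (x + 1) = α * E * ((x + 1) ^ (c + 1)) := by
          rw [Real.rpow_add ht c 1, Real.rpow_one]; ring
        refine le_of_mul_le_mul_right ?_ ht
        calc ((1 + s * β) * (α * E * x ^ c) + s * E) * (x + 1)
            = α * E * (x ^ c * (x + 1 + α * β) + 1) := e1
          _ ≤ α * E * ((x + 1) ^ (c + 1)) :=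
              mul_le_mul_of_nonneg_left hkey (mul_nonneg hα hE)
          _ = α * E * (x + 1) ^ c * (x + 1) := h2.symm
      calc ‖wr (i + 1) - wt (i + 1)‖ ≤ _ := step1
        _ ≤ _ := step2
        _ ≤ _ := step3
        _ ≤ α * E * (x + 1) ^ c := step4
        _ = α * E * ((i + 1 : ℕ) : ℝ) ^ c := by rw [hcast]
  have hfin := (main N le_rfl).2.2
  rw [hEdef, hcdef] at hfin
  have e : α * (γ * (k:ℝ) * lam ^ k) = α * γ * (k:ℝ) * lam ^ k := by ring
  rw [e] at hfin
  rw [hcdef]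
  exact hfin
end
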